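/- Coefficient identity via Saalschütz: Let a, b be complex numbers and N a nonnegative integer such that no factor in any denominator below vanishes (in particular 1 + a − b is not a nonpositive integer, and (1/2 − a/2 − N)_N ≠ 0). Then ∑_{k=0}^{N} (a/2)_k (1/2 + a/2 − b)_k (−4)^k (a + 2k)_{N−k} / ((1+a−b)_k (N−k)! k!) = (a)_N (1/2 + a/2)_N (1 − b − N)_N / (N! (1+a−b)_N (1/2 − a/2 − N)_N). -/

import Mathlib

/-!
Multiplying the summand by `(1+a-b)_N = (1+a-b)_k (1+a-b+k)_{N-k}` turns the left side into
`S_N / (1+a-b)_N`, where `S_N = ∑_k T(N,k)` (`T = Saalschutz.term`) has no denominators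
depending on `a, b`. Zeilberger's creative telescoping gives
`T(N+1,k) = (a+N)(b+N)/(N+1) T(N,k) + G(N,k+1) - G(N,k)` with the certificate
`G = Saalschutz.cert`, whence `S_N = (a)_N (b)_N / N!`. The right side reduces to the same
value by the reflection formula `(x)_N = (-1)^N (1-x-N)_N`, applied to `x = b` and to
`x = 1/2 + a/2`.
-/

open Complex Finset Filter Topology

/-- The Pochhammer symbol `(x)_k = x (x+1) ⋯ (x+k-1)`. -/
noncomputable def poch (x : ℂ) (k : ℕ) : ℂ := (ascPochhammer ℂ k).eval x

lemma poch_zero (x : ℂ) : poch x 0 = 1 := by simp [poch]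

lemma poch_succ (x : ℂ) (n : ℕ) : poch x (n + 1) = poch x n * (x + n) :=
  ascPochhammer_succ_eval n x

lemma poch_succ_left (x : ℂ) (n : ℕ) : poch x (n + 1) = x * poch (x + 1) n := by
  simp [poch, ascPochhammer_succ_left, Polynomial.eval_comp]

lemma poch_add (x : ℂ) (m n : ℕ) : poch x (m + n) = poch x m * poch (x + m) n := by
  simp [poch, ← ascPochhammer_mul, Polynomial.eval_comp]

lemma poch_ne_zero {x : ℂ} (h : ∀ j : ℕ, x + j ≠ 0) (n : ℕ) : poch x n ≠ 0 := by
  simp only [poch, ne_eq, ascPochhammer_eval_eq_zero_iff, not_exists, not_and]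
  intro j _ hj
  exact h j (by rw [hj]; ring)

lemma poch_eq_neg_one_pow_mul_poch (x : ℂ) (n : ℕ) :
    poch x n = (-1) ^ n * poch (1 - x - n) n := by
  rw [poch, ← neg_neg x, ascPochhammer_eval_neg_eq_descPochhammer,
    descPochhammer_eval_eq_ascPochhammer, poch]
  ring_nf

namespace Saalschutz

noncomputable def term (a b : ℂ) (N k : ℕ) : ℂ :=
  poch (a / 2) k * poch (1 / 2 + a / 2 - b) k * (-4) ^ k * poch (a + 2 * k) (N - k) *
    poch (1 + a - b + k) (N - k) / ((N - k).factorial * k.factorial)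

noncomputable def cert (a b : ℂ) (N k : ℕ) : ℂ :=
  -k * poch (a / 2) k * poch (1 / 2 + a / 2 - b) k * (-4) ^ k *
      poch (a + 2 * k - 1) (N + 1 - k) * poch (a - b + k) (N + 1 - k) /
    ((N + 1) * (N + 1 - k).factorial * k.factorial)

lemma term_succ (a b : ℂ) {N k : ℕ} (hk : k ≤ N) :
    term a b (N + 1) k
      = (a + N) * (b + N) / (N + 1) * term a b N k + (cert a b N (k + 1) - cert a b N k) := by
  obtain ⟨m, rfl⟩ := Nat.exists_eq_add_of_le hk
  simp only [term, cert, show k + m + 1 - k = m + 1 by omega, Nat.add_sub_cancel_left,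
    show k + m + 1 - (k + 1) = m by omega]
  -- the one relation between the atoms `(a+2k)_m`, `(a+2k+1)_m` that the identity needs
  have hshift := poch_succ_left (a + 2 * k) m
  rw [poch_succ] at hshift
  rw [poch_succ (a + 2 * k) m, poch_succ (1 + a - b + k) m, poch_succ_left (a + 2 * k - 1) m,
    poch_succ_left (a - b + k) m, poch_succ (a / 2) k, poch_succ (1 / 2 + a / 2 - b) k, pow_succ,
    Nat.factorial_succ m, Nat.factorial_succ k]
  push_cast
  simp only [show a + 2 * (k : ℂ) - 1 + 1 = a + 2 * k by ring,
    show a - b + (k : ℂ) + 1 = 1 + a - b + k by ring,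
    show a + 2 * ((k : ℂ) + 1) - 1 = a + 2 * k + 1 by ring,
    show a - b + ((k : ℂ) + 1) = 1 + a - b + k by ring]
  have hm : (m : ℂ) + 1 ≠ 0 := by exact_mod_cast m.succ_ne_zero
  have hk1 : (k : ℂ) + 1 ≠ 0 := by exact_mod_cast k.succ_ne_zero
  have hkm : (k : ℂ) + m + 1 ≠ 0 := by exact_mod_cast (k + m).succ_ne_zero
  have hfm : (m.factorial : ℂ) ≠ 0 := by exact_mod_cast m.factorial_ne_zero
  have hfk : (k.factorial : ℂ) ≠ 0 := by exact_mod_cast k.factorial_ne_zero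
  generalize poch (a / 2) k = A, poch (1 / 2 + a / 2 - b) k = C, poch (1 + a - b + k) m = Q,
    poch (a + 2 * k) m = P, poch (a + 2 * k + 1) m = X at hshift ⊢
  field_simp
  linear_combination 4 * (m + 1) * (1 + a - 2 * b + 2 * k) * A * C * Q * hshift

lemma cert_zero (a b : ℂ) (N : ℕ) : cert a b N 0 = 0 := by simp [cert]

lemma cert_succ_self (a b : ℂ) (N : ℕ) : cert a b N (N + 1) = -term a b (N + 1) (N + 1) := by
  have hN : (N : ℂ) + 1 ≠ 0 := by exact_mod_cast N.succ_ne_zero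
  have hf : ((N + 1).factorial : ℂ) ≠ 0 := by exact_mod_cast (N + 1).factorial_ne_zero
  simp only [cert, term, Nat.sub_self, poch_zero, Nat.factorial_zero]
  push_cast
  field_simp

lemma sum_term (a b : ℂ) (N : ℕ) :
    ∑ k ∈ range (N + 1), term a b N k = poch a N * poch b N / N.factorial := by
  induction N with
  | zero => simp [term, poch_zero]
  | succ N ih =>
    have hN : (N : ℂ) + 1 ≠ 0 := by exact_mod_cast N.succ_ne_zero
    have hf : (N.factorial : ℂ) ≠ 0 := by exact_mod_cast N.factorial_ne_zero
    rw [sum_range_succ, sum_congr rfl fun k hk ↦ term_succ a b (mem_range_succ_iff.mp hk),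
      sum_add_distrib, ← mul_sum, ih, sum_range_sub (cert a b N), cert_zero, cert_succ_self,
      poch_succ a N, poch_succ b N, Nat.factorial_succ]
    push_cast
    field_simp
    ring

lemma summand_eq_term_div {a b : ℂ} (h : ∀ j : ℕ, 1 + a - b + j ≠ 0) {N k : ℕ}
    (hk : k ≤ N) :
    poch (a / 2) k * poch (1 / 2 + a / 2 - b) k * (-4) ^ k * poch (a + 2 * k) (N - k) /
        (poch (1 + a - b) k * (N - k).factorial * k.factorial)
      = term a b N k / poch (1 + a - b) N := by
  obtain ⟨m, rfl⟩ := Nat.exists_eq_add_of_le hk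
  have hP : poch (1 + a - b) k ≠ 0 := poch_ne_zero h k
  have hQ : poch (1 + a - b + k) m ≠ 0 :=
    poch_ne_zero (fun j hj ↦ h (k + j) (by push_cast; linear_combination hj)) m
  have hfm : (m.factorial : ℂ) ≠ 0 := by exact_mod_cast m.factorial_ne_zero
  have hfk : (k.factorial : ℂ) ≠ 0 := by exact_mod_cast k.factorial_ne_zero
  rw [term, Nat.add_sub_cancel_left, poch_add]
  field_simp

end Saalschutz

theorem coefficient_identity_saalschutz (a b : ℂ) (N : ℕ)
    (h1 : ∀ m : ℕ, 1 + a - b ≠ -(m : ℂ))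
    (h2 : poch (1 / 2 - a / 2 - N) N ≠ 0) :
    ∑ k ∈ range (N + 1),
        poch (a / 2) k * poch (1 / 2 + a / 2 - b) k * (-4 : ℂ) ^ k *
          poch (a + 2 * k) (N - k) /
        (poch (1 + a - b) k * (Nat.factorial (N - k) : ℂ) * (Nat.factorial k : ℂ))
      = poch a N * poch (1 / 2 + a / 2) N * poch (1 - b - N) N /
        ((Nat.factorial N : ℂ) * poch (1 + a - b) N * poch (1 / 2 - a / 2 - N) N) := by
  have hd : ∀ j : ℕ, 1 + a - b + j ≠ 0 := fun j hj ↦ h1 j (by linear_combination hj)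
  rw [sum_congr rfl fun k hk ↦ Saalschutz.summand_eq_term_div hd (mem_range_succ_iff.mp hk),
    ← sum_div, Saalschutz.sum_term, poch_eq_neg_one_pow_mul_poch b,
    poch_eq_neg_one_pow_mul_poch (1 / 2 + a / 2),
    show 1 - (1 / 2 + a / 2) - N = 1 / 2 - a / 2 - N by ring]
  have hf : (N.factorial : ℂ) ≠ 0 := by exact_mod_cast N.factorial_ne_zero
  have hP : poch (1 + a - b) N ≠ 0 := poch_ne_zero hd N
  rw [div_div, div_eq_div_iff (mul_ne_zero hf hP) (mul_ne_zero (mul_ne_zero hf hP) h2)]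
  ring
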